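/- Let G be a graph with Laplacian L, a, b twin vertices, M = (e_a - e_b)(e_a - e_b)^T, α ∈ ℝ. If G has Laplacian pretty good pair state transfer from e_p - e_q to e_c - e_d with p, q, c, d all distinct from a and b (i.e., for every ε > 0 there is τ with |(1/2)(e_p - e_q)^T exp(-iτL)(e_c - e_d)|² ≥ 1 - ε), then the perturbed graph with Laplacian L + αM also has Laplacian pretty good pair state transfer from e_p - e_q to e_c - e_d. -/

import Mathlib

/-!
Twin vertices make `e_a - e_b` an eigenvector of the Laplacian `L`, so `L` commutes with
`M = (e_a - e_b)(e_a - e_b)ᵀ` and `exp(-iτ(L + αM)) = exp(-iτL) exp(-iταM)`. Since `c, d ∉ {a, b}`,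
`M` annihilates `e_c - e_d`, hence the second factor fixes it and `L + αM` has exactly the same
transfer amplitudes from `e_c - e_d` as `L`, at every time `τ`.
-/

open Matrix

namespace SimpleGraph

variable {V : Type*} (G : SimpleGraph V)

def AreTwins (a b : V) : Prop :=
  ∀ v, v ≠ a → v ≠ b → (G.Adj a v ↔ G.Adj b v)

variable {G} [DecidableEq V] {a b : V}

def AreTwins.swapIso (h : G.AreTwins a b) : G ≃g G where
  toEquiv := Equiv.swap a b
  map_rel_iff' {x y} := by
    have hx := h x
    have hy := h y
    simp only [Equiv.swap_apply_def]
    split_ifs <;> grind [G.adj_comm, G.irrefl]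

variable [Fintype V] [DecidableRel G.Adj]

theorem AreTwins.degree_eq (h : G.AreTwins a b) : G.degree a = G.degree b :=
  calc G.degree a = G.degree (h.swapIso a) := (h.swapIso.degree_eq a).symm
    _ = G.degree b := by rw [show h.swapIso a = b from Equiv.swap_apply_left a b]

theorem AreTwins.lapMatrix_mulVec_single_sub_single {R : Type*} [Ring R] (h : G.AreTwins a b) :
    G.lapMatrix R *ᵥ (Pi.single a 1 - Pi.single b 1) =
      (G.degree a + if G.Adj a b then 1 else 0 : R) • (Pi.single a 1 - Pi.single b 1) := by
  obtain rfl | hab := eq_or_ne a b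
  · simp
  ext i
  have hsum : ∑ w ∈ G.neighborFinset i, (Pi.single a 1 - Pi.single b 1 : V → R) w =
      (if G.Adj i a then 1 else 0) - (if G.Adj i b then 1 else 0) := by
    simp [Finset.sum_sub_distrib]
  rw [lapMatrix_mulVec_apply, hsum]
  by_cases hia : i = a
  · subst hia
    by_cases hadj : G.Adj i b <;> simp [hab, hadj]
  by_cases hib : i = b
  · subst hib
    by_cases hadj : G.Adj a i <;>
      simp [hab.symm, hadj, h.degree_eq, G.adj_comm i a, neg_add_eq_sub]
  · simp [hia, hib, G.adj_comm i, h i hia hib]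

end SimpleGraph

namespace Matrix

variable {m R : Type*} [Fintype m]

theorem commute_vecMulVec_self_of_mulVec_eq_smul [CommSemiring R] {A : Matrix m m R}
    (hA : A.IsSymm) {u : m → R} {μ : R} (hu : A *ᵥ u = μ • u) :
    Commute A (vecMulVec u u) := by
  rw [Commute, SemiconjBy, mul_vecMulVec, vecMulVec_mul, ← mulVec_transpose, hA.eq, hu,
    smul_vecMulVec, vecMulVec_smul]

theorem pow_mulVec_of_mulVec_eq_smul [DecidableEq m] [CommSemiring R] {A : Matrix m m R}
    {v : m → R} {μ : R} (hv : A *ᵥ v = μ • v) (k : ℕ) : (A ^ k) *ᵥ v = μ ^ k • v := by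
  induction k with
  | zero => simp
  | succ k ih => rw [pow_succ', ← mulVec_mulVec, ih, mulVec_smul, hv, smul_smul, pow_succ]

open scoped Norms.Operator in
theorem exp_mulVec_of_mulVec_eq_smul [DecidableEq m] {𝕂 : Type*} [RCLike 𝕂] {A : Matrix m m 𝕂}
    {v : m → 𝕂} {μ : 𝕂} (hv : A *ᵥ v = μ • v) :
    NormedSpace.exp A *ᵥ v = NormedSpace.exp μ • v := by
  have hA := (NormedSpace.exp_series_hasSum_exp' (𝕂 := 𝕂) A).map (mulVec.addMonoidHomLeft v)
    (continuous_id.matrix_mulVec continuous_const)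
  have hμ := (NormedSpace.exp_series_hasSum_exp' (𝕂 := 𝕂) μ).smul_const v
  refine hA.unique (hμ.congr_fun fun k => ?_)
  simp [mulVec.addMonoidHomLeft, smul_mulVec, pow_mulVec_of_mulVec_eq_smul hv, smul_smul]

theorem exp_add_mulVec_of_commute [DecidableEq m] {𝕂 : Type*} [RCLike 𝕂] {A B : Matrix m m 𝕂}
    (hAB : Commute A B) {v : m → 𝕂} (hv : B *ᵥ v = 0) :
    NormedSpace.exp (A + B) *ᵥ v = NormedSpace.exp A *ᵥ v := by
  have hexp : NormedSpace.exp B *ᵥ v = v := by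
    simpa using exp_mulVec_of_mulVec_eq_smul (μ := (0 : 𝕂)) (by rw [hv, zero_smul])
  rw [exp_add_of_commute A B hAB, ← mulVec_mulVec, hexp]

end Matrix

theorem pair_lpgst_preserved_under_twin_perturbation_general
    {n : ℕ} (G : SimpleGraph (Fin n)) [DecidableRel G.Adj]
    (a b p q c d : Fin n)
    (hca : c ≠ a) (hcb : c ≠ b) (hda : d ≠ a) (hdb : d ≠ b)
    (htwin : ∀ v : Fin n, v ≠ a → v ≠ b → (G.Adj a v ↔ G.Adj b v)) (α : ℝ)
    (hlpgst : ∀ ε : ℝ, 0 < ε → ∃ τ : ℝ,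
      ‖((1 / 2 : ℂ) *
          dotProduct ((Pi.single p 1 : Fin n → ℂ) - Pi.single q 1)
            ((NormedSpace.exp ((-(Complex.I * (τ : ℂ))) • G.lapMatrix ℂ)).mulVec
              ((Pi.single c 1 : Fin n → ℂ) - Pi.single d 1)))‖ ^ 2
        ≥ 1 - ε) :
    ∀ ε : ℝ, 0 < ε → ∃ τ : ℝ,
      ‖((1 / 2 : ℂ) *
          dotProduct ((Pi.single p 1 : Fin n → ℂ) - Pi.single q 1)
            ((NormedSpace.exp ((-(Complex.I * (τ : ℂ))) •
                (G.lapMatrix ℂ + (α : ℂ) •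
                  vecMulVec ((Pi.single a 1 : Fin n → ℂ) - Pi.single b 1)
                    ((Pi.single a 1 : Fin n → ℂ) - Pi.single b 1)))).mulVec
              ((Pi.single c 1 : Fin n → ℂ) - Pi.single d 1)))‖ ^ 2
        ≥ 1 - ε := by
  set u : Fin n → ℂ := Pi.single a 1 - Pi.single b 1
  set v : Fin n → ℂ := Pi.single c 1 - Pi.single d 1
  have hcomm : Commute (G.lapMatrix ℂ) (vecMulVec u u) :=
    commute_vecMulVec_self_of_mulVec_eq_smul (G.isSymm_lapMatrix ℂ)
      (SimpleGraph.AreTwins.lapMatrix_mulVec_single_sub_single htwin)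
  have horth : u ⬝ᵥ v = 0 := by simp [u, v, hca, hcb, hda, hdb]
  have hker : vecMulVec u u *ᵥ v = 0 := by
    rw [vecMulVec_mulVec, horth, MulOpposite.op_zero, zero_smul]
  intro ε hε
  obtain ⟨τ, hτ⟩ := hlpgst ε hε
  refine ⟨τ, ?_⟩
  rwa [smul_add, exp_add_mulVec_of_commute ((hcomm.smul_right _).smul_left _ |>.smul_right _)
    (by rw [smul_mulVec, smul_mulVec, hker, smul_zero, smul_zero])]

theorem pair_lpgst_preserved_under_twin_perturbation
    {n : ℕ} (G : SimpleGraph (Fin n)) [DecidableRel G.Adj]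
    (a b p q c d : Fin n) (hab : a ≠ b)
    (hpa : p ≠ a) (hpb : p ≠ b) (hqa : q ≠ a) (hqb : q ≠ b)
    (hca : c ≠ a) (hcb : c ≠ b) (hda : d ≠ a) (hdb : d ≠ b)
    (htwin : ∀ v : Fin n, v ≠ a → v ≠ b → (G.Adj a v ↔ G.Adj b v)) (α : ℝ)
    (hlpgst : ∀ ε : ℝ, 0 < ε → ∃ τ : ℝ,
      ‖((1 / 2 : ℂ) *
          dotProduct ((Pi.single p 1 : Fin n → ℂ) - Pi.single q 1)
            ((NormedSpace.exp ((-(Complex.I * (τ : ℂ))) • G.lapMatrix ℂ)).mulVec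
              ((Pi.single c 1 : Fin n → ℂ) - Pi.single d 1)))‖ ^ 2
        ≥ 1 - ε) :
    ∀ ε : ℝ, 0 < ε → ∃ τ : ℝ,
      ‖((1 / 2 : ℂ) *
          dotProduct ((Pi.single p 1 : Fin n → ℂ) - Pi.single q 1)
            ((NormedSpace.exp ((-(Complex.I * (τ : ℂ))) •
                (G.lapMatrix ℂ + (α : ℂ) •
                  vecMulVec ((Pi.single a 1 : Fin n → ℂ) - Pi.single b 1)
                    ((Pi.single a 1 : Fin n → ℂ) - Pi.single b 1)))).mulVec
              ((Pi.single c 1 : Fin n → ℂ) - Pi.single d 1)))‖ ^ 2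
        ≥ 1 - ε :=
  pair_lpgst_preserved_under_twin_perturbation_general G a b p q c d hca hcb hda hdb htwin α hlpgst
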